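/- arXiv:1810.00920 — 5 statements merged into one kernel-verified Lean document; each statement's English description precedes it below -/
import Mathlib

section
/- If A ⊆ C([n],a) and B ⊆ C([n],b) are cross-intersecting families, then the lexicographic families L([n],|A|,a) and L([n],|B|,b) are also cross-intersecting. -/
open Finset

/-- `A` precedes `B` in the lexicographic order: the minimal element of `A \ B` is smaller
than the minimal element of `B \ A`. -/
def lexLt (A B : Finset ℕ) : Prop := (A \ B).min < (B \ A).min

/-- `L` is the family of the `m` lexicographically first `k`-subsets of `[n]`, characterized
as an initial segment of size `m` of the lexicographic order on `C([n],k)`. -/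
def isLexInitSeg (n m k : ℕ) (L : Finset (Finset ℕ)) : Prop :=
  L ⊆ (Finset.Icc 1 n).powersetCard k ∧ L.card = m ∧
    ∀ A ∈ L, ∀ B ∈ (Finset.Icc 1 n).powersetCard k, lexLt B A → B ∈ L

/-!
Reversing `[n]` by `x ↦ n - x` turns `lexLt` into the reversed colex order on `Fin n`, so the
lexicographic families become colex final segments `𝒰` and `𝒱`. Suppose `s ∈ 𝒰` and `t ∈ 𝒱` are
disjoint and put `k = n - a - b`. Then `s ⊆ tᶜ`, so `s` lies in `𝒥 = ∂^[k] {vᶜ | v ∈ 𝒱}`, which is a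
colex initial segment of `a`-sets; an initial and a final segment of `a`-sets sharing a member
cover all `a`-sets, so `C(n,a) < |𝒥| + |𝒰|`. On the other hand `𝒜` is disjoint from
`∂^[k] {uᶜ | u ∈ ℬ}`, as `𝒜` and `ℬ` are cross-intersecting, and by Kruskal–Katona this shadow is at
least as large as `𝒥`; hence `|𝒰| + |𝒥| ≤ |𝒜| + |∂^[k] {uᶜ | u ∈ ℬ}| ≤ C(n,a)`.
-/

open scoped FinsetFamily
open Finset.Colex

lemma Finset.min_lt_min_iff {α : Type*} [LinearOrder α] {s t : Finset α} :
    s.min < t.min ↔ ∃ a ∈ s, ∀ b ∈ t, a < b := by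
  simp [min_eq_inf_withTop, Finset.inf_lt_iff, Finset.lt_inf_iff]

lemma lexLt_iff_toColex_lt {S T : Finset ℕ} :
    lexLt S T ↔ toColex (T.image OrderDual.toDual) < toColex (S.image OrderDual.toDual) := by
  simp [lexLt, Finset.min_lt_min_iff, toColex_lt_toColex_iff_exists_forall_lt, and_assoc]

lemma Set.Sized.image_compl {α : Type*} [Fintype α] [DecidableEq α] {𝒜 : Finset (Finset α)}
    {r : ℕ} (h : (𝒜 : Set (Finset α)).Sized r) :
    ((𝒜.image compl : Finset (Finset α)) : Set (Finset α)).Sized (Fintype.card α - r) := by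
  rintro _ hu
  obtain ⟨s, hs, rfl⟩ := Finset.mem_image.1 (Finset.mem_coe.1 hu)
  rw [Finset.card_compl, h hs]

lemma Finset.disjoint_shadow_iterate_image_compl {α : Type*} [Fintype α] [DecidableEq α]
    {𝒜 ℬ : Finset (Finset α)}
    (h : ∀ s ∈ 𝒜, ∀ t ∈ ℬ, (s ∩ t).Nonempty) (k : ℕ) :
    Disjoint 𝒜 (∂^[k] (ℬ.image compl)) := by
  rw [disjoint_left]
  intro s hs hs'
  obtain ⟨_, hu, hsu, -⟩ := mem_shadow_iterate_iff_exists_sdiff.1 hs'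
  obtain ⟨t, ht, rfl⟩ := mem_image.1 hu
  rw [subset_compl_iff_disjoint_right, disjoint_iff_inter_eq_empty] at hsu
  simpa [hsu] using h s hs t ht

namespace Finset.Colex

variable {α : Type*} [LinearOrder α]

def IsFinalSeg (𝒜 : Finset (Finset α)) (r : ℕ) : Prop :=
  (𝒜 : Set (Finset α)).Sized r ∧
    ∀ ⦃s t : Finset α⦄, s ∈ 𝒜 → toColex s < toColex t ∧ #t = r → t ∈ 𝒜

lemma IsInitSeg.shadow_iterate [Finite α] {𝒜 : Finset (Finset α)} {r : ℕ} (h : IsInitSeg 𝒜 r)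
    (k : ℕ) : IsInitSeg (∂^[k] 𝒜) (r - k) := by
  induction k with
  | zero => simpa
  | succ k ih => simpa only [Function.iterate_succ_apply', Nat.sub_add_eq] using ih.shadow

variable [Fintype α]

lemma toColex_compl_lt_toColex_compl {s t : Finset α} :
    toColex sᶜ < toColex tᶜ ↔ toColex t < toColex s := by
  simp only [toColex_lt_toColex_iff_exists_forall_lt, mem_compl, not_not]
  grind

lemma IsFinalSeg.image_compl {𝒜 : Finset (Finset α)} {r : ℕ} (h : IsFinalSeg 𝒜 r) :
    IsInitSeg (𝒜.image compl) (Fintype.card α - r) := by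
  refine ⟨h.1.image_compl, fun _ t hu ⟨hts, ht⟩ => ?_⟩
  obtain ⟨s, hs, rfl⟩ := mem_image.1 hu
  refine mem_image.2 ⟨tᶜ, h.2 hs ⟨?_, ?_⟩, compl_compl t⟩
  · rwa [← toColex_compl_lt_toColex_compl, compl_compl]
  · have := h.1 hs
    have := card_le_univ s
    rw [card_compl, ht]
    omega

lemma IsInitSeg.choose_lt_card_add_card {𝒥 𝒰 : Finset (Finset α)} {r : ℕ} (h𝒥 : IsInitSeg 𝒥 r)
    (h𝒰 : IsFinalSeg 𝒰 r) (h : (𝒥 ∩ 𝒰).Nonempty) :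
    (Fintype.card α).choose r < #𝒥 + #𝒰 := by
  obtain ⟨s, hs⟩ := h
  obtain ⟨hs𝒥, hs𝒰⟩ := mem_inter.1 hs
  have hcover : powersetCard r univ ⊆ 𝒥 ∪ 𝒰 := by
    intro t ht
    have htr := (mem_powersetCard.1 ht).2
    rcases lt_trichotomy (toColex t) (toColex s) with hlt | heq | hgt
    · exact mem_union_left _ (h𝒥.2 hs𝒥 ⟨hlt, htr⟩)
    · exact mem_union_right _ (toColex_inj.1 heq ▸ hs𝒰)
    · exact mem_union_right _ (h𝒰.2 hs𝒰 ⟨hgt, htr⟩)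
  calc (Fintype.card α).choose r = #(powersetCard r (univ : Finset α)) := by
        rw [card_powersetCard, card_univ]
    _ < #(𝒥 ∪ 𝒰) + #(𝒥 ∩ 𝒰) := by
        have := card_le_card hcover
        have := card_pos.2 ⟨s, hs⟩
        omega
    _ = #𝒥 + #𝒰 := card_union_add_card_inter _ _

theorem inter_nonempty_of_isFinalSeg {n a b : ℕ} {𝒜 ℬ 𝒰 𝒱 : Finset (Finset (Fin n))}
    (h𝒜 : (𝒜 : Set (Finset (Fin n))).Sized a) (hℬ : (ℬ : Set (Finset (Fin n))).Sized b)
    (hcross : ∀ s ∈ 𝒜, ∀ t ∈ ℬ, (s ∩ t).Nonempty)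
    (h𝒰 : IsFinalSeg 𝒰 a) (h𝒱 : IsFinalSeg 𝒱 b) (hc𝒰 : #𝒰 ≤ #𝒜) (hc𝒱 : #𝒱 ≤ #ℬ) :
    ∀ s ∈ 𝒰, ∀ t ∈ 𝒱, (s ∩ t).Nonempty := by
  intro s hs t ht
  by_contra hst
  rw [not_nonempty_iff_eq_empty, ← disjoint_iff_inter_eq_empty,
    ← subset_compl_iff_disjoint_right] at hst
  have hs_card := h𝒰.1 hs
  have ht_card := h𝒱.1 ht
  have hab : a + b ≤ n := by
    have := card_le_card hst
    have := card_le_univ t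
    rw [card_compl, Fintype.card_fin] at *
    omega
  set k := n - a - b
  have hnbk : n - b - k = a := by omega
  have h𝒥 : IsInitSeg (∂^[k] (𝒱.image compl)) a := by
    simpa [hnbk] using h𝒱.image_compl.shadow_iterate k
  have hs𝒥 : s ∈ ∂^[k] (𝒱.image compl) := by
    refine mem_shadow_iterate_iff_exists_sdiff.2 ⟨tᶜ, mem_image_of_mem _ ht, hst, ?_⟩
    rw [card_sdiff_of_subset hst, card_compl, Fintype.card_fin]
    omega
  have hkk : #(∂^[k] (𝒱.image compl)) ≤ #(∂^[k] (ℬ.image compl)) := by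
    refine iterated_kk hℬ.image_compl ?_ h𝒱.image_compl
    rwa [card_image_of_injective _ compl_injective, card_image_of_injective _ compl_injective]
  have hcount : #𝒜 + #(∂^[k] (ℬ.image compl)) ≤ n.choose a := by
    rw [← card_union_of_disjoint (disjoint_shadow_iterate_image_compl hcross k)]
    calc _ ≤ #(powersetCard a (univ : Finset (Fin n))) := by
          refine card_le_card (union_subset (subset_powersetCard_univ_iff.2 h𝒜) ?_)
          have := hℬ.image_compl.shadow_iterate (k := k)
          rwa [Fintype.card_fin, hnbk, ← subset_powersetCard_univ_iff] at this
      _ = n.choose a := by simp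
  have := h𝒥.choose_lt_card_add_card h𝒰 ⟨s, mem_inter.2 ⟨hs𝒥, hs⟩⟩
  rw [Fintype.card_fin] at this
  omega

end Finset.Colex

def revEmbedding (n : ℕ) : Fin n ↪ ℕ :=
  ⟨fun i => n - i, fun i j h => Fin.ext (by have := i.isLt; have := j.isLt; dsimp only at h; omega)⟩

@[simp] lemma revEmbedding_apply {n : ℕ} (i : Fin n) : revEmbedding n i = n - i := rfl

lemma revEmbedding_strictAnti (n : ℕ) : StrictAnti (revEmbedding n) := fun i j h => by
  have := j.isLt
  rw [Fin.lt_def] at h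
  simp only [revEmbedding_apply]
  omega

lemma map_univ_revEmbedding (n : ℕ) : univ.map (revEmbedding n) = Icc 1 n := by
  ext x
  simp only [mem_map, mem_univ, true_and, mem_Icc, revEmbedding_apply]
  constructor
  · rintro ⟨i, rfl⟩
    have := i.isLt
    omega
  · rintro ⟨h1, h2⟩
    exact ⟨⟨n - x, by omega⟩, by dsimp only; omega⟩

lemma lexLt_map_revEmbedding {n : ℕ} {s t : Finset (Fin n)} :
    lexLt (s.map (revEmbedding n)) (t.map (revEmbedding n)) ↔ toColex t < toColex s := by
  rw [lexLt_iff_toColex_lt, map_eq_image, map_eq_image, image_image, image_image,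
    toColex_image_lt_toColex_image (revEmbedding_strictAnti n).dual_right]

lemma exists_eq_map_of_subset_powersetCard_Icc {n k : ℕ} {𝒜 : Finset (Finset ℕ)}
    (h : 𝒜 ⊆ (Icc 1 n).powersetCard k) :
    ∃ 𝒜' : Finset (Finset (Fin n)), (𝒜' : Set (Finset (Fin n))).Sized k ∧
      𝒜 = 𝒜'.map (mapEmbedding (revEmbedding n)).toEmbedding := by
  rw [← map_univ_revEmbedding, powersetCard_map, subset_map_iff] at h
  obtain ⟨𝒜', h𝒜', rfl⟩ := h
  exact ⟨𝒜', subset_powersetCard_univ_iff.1 h𝒜', rfl⟩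

lemma isFinalSeg_of_isLexInitSeg_map {n m k : ℕ} {𝒰 : Finset (Finset (Fin n))}
    (h : isLexInitSeg n m k (𝒰.map (mapEmbedding (revEmbedding n)).toEmbedding)) :
    IsFinalSeg 𝒰 k ∧ #𝒰 = m := by
  obtain ⟨hsub, hcard, hinit⟩ := h
  rw [← map_univ_revEmbedding, powersetCard_map, map_subset_map] at hsub
  refine ⟨⟨subset_powersetCard_univ_iff.1 hsub, fun s t hs ⟨hst, ht⟩ => ?_⟩, by simpa using hcard⟩
  have ht' : t.map (revEmbedding n) ∈ (Icc 1 n).powersetCard k := by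
    rw [← map_univ_revEmbedding, powersetCard_map]
    exact mem_map_of_mem _ (mem_powersetCard_univ.2 ht)
  simpa using hinit _ (mem_map_of_mem _ hs) _ ht' (lexLt_map_revEmbedding.2 hst)

/-- Kruskal–Katona in Hilton's form: if `A ⊆ C([n],a)` and `B ⊆ C([n],b)` are
cross-intersecting, then the lexicographic families `L([n],|A|,a)` and `L([n],|B|,b)`
are also cross-intersecting. -/
theorem hilton_kruskal_katona (n a b : ℕ)
    (A B : Finset (Finset ℕ))
    (hA : A ⊆ (Finset.Icc 1 n).powersetCard a)
    (hB : B ⊆ (Finset.Icc 1 n).powersetCard b)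
    (hcross : ∀ S ∈ A, ∀ T ∈ B, (S ∩ T).Nonempty)
    (LA LB : Finset (Finset ℕ))
    (hLA : isLexInitSeg n A.card a LA) (hLB : isLexInitSeg n B.card b LB) :
    ∀ S ∈ LA, ∀ T ∈ LB, (S ∩ T).Nonempty := by
  obtain ⟨𝒜, h𝒜, rfl⟩ := exists_eq_map_of_subset_powersetCard_Icc hA
  obtain ⟨ℬ, hℬ, rfl⟩ := exists_eq_map_of_subset_powersetCard_Icc hB
  obtain ⟨𝒰, -, rfl⟩ := exists_eq_map_of_subset_powersetCard_Icc hLA.1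
  obtain ⟨𝒱, -, rfl⟩ := exists_eq_map_of_subset_powersetCard_Icc hLB.1
  obtain ⟨h𝒰, hc𝒰⟩ := isFinalSeg_of_isLexInitSeg_map hLA
  obtain ⟨h𝒱, hc𝒱⟩ := isFinalSeg_of_isLexInitSeg_map hLB
  simp only [forall_mem_map, RelEmbedding.coe_toEmbedding, mapEmbedding_apply, ← map_inter,
    map_nonempty] at hcross ⊢
  exact inter_nonempty_of_isFinalSeg h𝒜 hℬ hcross h𝒰 h𝒱 (hc𝒰.trans (card_map _)).le
    (hc𝒱.trans (card_map _)).le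
end

section
/- Let a, b be positive integers with a + b ≤ n - 1, and let P, Q be nonempty subsets of [2,n] with |P| ≤ a and |Q| ≤ b. Then the lexicographic families L([2,n],P,a) and L([2,n],Q,b) are cross-intersecting if and only if P and Q strongly intersect. -/
open Finset

/-- The lexicographic family `L(X,S,a) = {A ∈ C(X,a) : A ≼ S ∩ X}` in the
lexicographic/containment order (`A ≼ B` iff `A ⊇ B` or `min (A \ B) < min (B \ A)`). -/
def lexFam (X S : Finset ℕ) (a : ℕ) : Finset (Finset ℕ) :=
  (X.powersetCard a).filter
    (fun A => (S ∩ X) ⊆ A ∨ (A \ (S ∩ X)).min < ((S ∩ X) \ A).min)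

/-- `S` and `T` strongly intersect: there is `j` with `S ∩ T ∩ [2,j] = {j}` and
`[2,j] ⊆ S ∪ T`. -/
def strongInt (S T : Finset ℕ) : Prop :=
  ∃ j : ℕ, S ∩ T ∩ Finset.Icc 2 j = {j} ∧ Finset.Icc 2 j ⊆ S ∪ T

/-!
If `P` and `Q` strongly intersect at `j` and `A ≼ P`, `B ≼ Q` were disjoint, then by induction
along `[2, j]` the set `A` would contain `P ∩ [2, j]` and `B` would contain `Q ∩ [2, j]`: a first
element of `P` missing from `A` is preceded by an element of `A \ P`, which lies in `Q` because
`[2, j] ⊆ P ∪ Q`, hence in `B`. So `j ∈ A ∩ B`. Conversely, without strong intersection one finds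
a set of at most `|P|` elements avoiding `Q` all of whose supersets precede `P`; since
`a + b ≤ |[2, n]|` it extends, together with `Q`, to disjoint members of the two families.
-/

def LexLE {α : Type*} [LinearOrder α] (A B : Finset α) : Prop :=
  B ⊆ A ∨ (A \ B).min < (B \ A).min

section LexLE

variable {α : Type*} [LinearOrder α] {A B : Finset α}

theorem lexLE_iff : LexLE A B ↔ ∀ m ∈ B \ A, ∃ x ∈ A \ B, x < m := by
  constructor
  · rintro (hBA | hlt) m hm
    · exact absurd (hBA (mem_sdiff.mp hm).1) (mem_sdiff.mp hm).2
    · have : (A \ B).min < m := hlt.trans_le (min_le hm)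
      simpa [Finset.le_min_iff, and_assoc] using (not_le.mpr this)
  · intro h
    by_cases hBA : B ⊆ A
    · exact Or.inl hBA
    · have hne : (B \ A).Nonempty := sdiff_nonempty.mpr hBA
      obtain ⟨x, hx, hxm⟩ := h _ (min'_mem _ hne)
      refine Or.inr ?_
      rw [← coe_min' hne]
      exact (min_le hx).trans_lt (WithTop.coe_lt_coe.mpr hxm)

theorem lexLE_of_subset (h : B ⊆ A) : LexLE A B := Or.inl h

theorem lexLE_of_mem_of_forall_lt {t : α} (htA : t ∈ A) (htB : t ∉ B)
    (hlt : ∀ x ∈ B, x < t → x ∈ A) : LexLE A B := by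
  refine lexLE_iff.mpr fun m hm => ⟨t, mem_sdiff.mpr ⟨htA, htB⟩, ?_⟩
  obtain ⟨hmB, hmA⟩ := mem_sdiff.mp hm
  rcases lt_trichotomy m t with h | rfl | h
  · exact absurd (hlt m hmB h) hmA
  · exact absurd hmB htB
  · exact h

end LexLE

theorem mem_lexFam {X S A : Finset ℕ} {a : ℕ} :
    A ∈ lexFam X S a ↔ (A ⊆ X ∧ A.card = a) ∧ LexLE A (S ∩ X) := by
  rw [lexFam, mem_filter, mem_powersetCard, LexLE]

section Disjointness

variable {α : Type*} [LinearOrder α] {A B P Q : Finset α}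

theorem LexLE.mem_of_forall_lt {m : α} (hA : LexLE A P) (hAB : Disjoint A B)
    (hcov : ∀ x ∈ A, x < m → x ∈ P ∪ Q) (hQB : ∀ x < m, x ∈ Q → x ∈ B) (hm : m ∈ P) :
    m ∈ A := by
  by_contra hmA
  obtain ⟨x, hx, hxm⟩ := lexLE_iff.mp hA m (mem_sdiff.mpr ⟨hm, hmA⟩)
  obtain ⟨hxA, hxP⟩ := mem_sdiff.mp hx
  have hxQ : x ∈ Q := (mem_union.mp (hcov x hxA hxm)).resolve_left hxP
  exact disjoint_left.mp hAB hxA (hQB x hxm hxQ)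

theorem not_disjoint_of_lexLE [WellFoundedLT α] {j : α} (hA : LexLE A P) (hB : LexLE B Q)
    (hcov : ∀ x ∈ A ∪ B, x < j → x ∈ P ∪ Q) (hj : j ∈ P ∩ Q) : ¬Disjoint A B := by
  intro hAB
  have key : ∀ m ≤ j, (m ∈ P → m ∈ A) ∧ (m ∈ Q → m ∈ B) := by
    intro m
    induction m using WellFoundedLT.induction with
    | _ m ih =>
      intro hmj
      have hbelow : ∀ x ∈ A ∪ B, x < m → x ∈ P ∪ Q :=
        fun x hx hxm => hcov x hx (hxm.trans_le hmj)
      refine ⟨hA.mem_of_forall_lt hAB (fun x hx => hbelow x (mem_union_left _ hx))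
        (fun x hx => (ih x hx (hx.le.trans hmj)).2), ?_⟩
      refine hB.mem_of_forall_lt hAB.symm (fun x hx hxm => ?_)
        (fun x hx => (ih x hx (hx.le.trans hmj)).1)
      rw [union_comm]
      exact hbelow x (mem_union_right _ hx) hxm
  obtain ⟨hjP, hjQ⟩ := mem_inter.mp hj
  exact disjoint_left.mp hAB ((key j le_rfl).1 hjP) ((key j le_rfl).2 hjQ)

end Disjointness

theorem exists_disjoint_supersets_card_eq {α : Type*} [DecidableEq α] {X A₀ Q : Finset α}
    {a b : ℕ} (hA₀ : A₀ ⊆ X) (hQ : Q ⊆ X) (hdisj : Disjoint A₀ Q) (ha : A₀.card ≤ a)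
    (hb : Q.card ≤ b) (hab : a + b ≤ X.card) :
    ∃ A B, A₀ ⊆ A ∧ Q ⊆ B ∧ A ⊆ X ∧ B ⊆ X ∧ A.card = a ∧ B.card = b ∧ Disjoint A B := by
  obtain ⟨A, hA₀A, hAXQ, hAcard⟩ := exists_subsuperset_card_eq
    (subset_sdiff.mpr ⟨hA₀, hdisj⟩) ha (by rw [card_sdiff_of_subset hQ]; omega)
  have hAX : A ⊆ X := hAXQ.trans sdiff_subset
  obtain ⟨B, hQB, hBXA, hBcard⟩ := exists_subsuperset_card_eq
    (subset_sdiff.mpr ⟨hQ, (disjoint_of_subset_left hAXQ sdiff_disjoint).symm⟩) hb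
    (by rw [card_sdiff_of_subset hAX, hAcard]; omega)
  exact ⟨A, B, hA₀A, hQB, hAX, hBXA.trans sdiff_subset, hAcard, hBcard,
    disjoint_of_subset_right hBXA disjoint_sdiff⟩

/-- With `j = min (P ∩ Q)`, the failure of strong intersection yields some `t < j` outside
`P ∪ Q`; a set containing `t` and agreeing with `P` below `t` then avoids `Q` yet precedes `P`. -/
theorem exists_seed_of_not_strongInt {n : ℕ} {P Q : Finset ℕ} (hP : P ⊆ Icc 2 n)
    (h : ¬strongInt P Q) :
    ∃ A₀ ⊆ Icc 2 n, A₀.card ≤ P.card ∧ Disjoint A₀ Q ∧ ∀ A, A₀ ⊆ A → LexLE A P := by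
  rcases (P ∩ Q).eq_empty_or_nonempty with hPQ | hPQ
  · exact ⟨P, hP, le_rfl, disjoint_iff_inter_eq_empty.mpr hPQ, fun _ => lexLE_of_subset⟩
  set j := (P ∩ Q).min' hPQ
  obtain ⟨hjP, hjQ⟩ := mem_inter.mp (min'_mem _ hPQ)
  have hjmin : ∀ x ∈ P, x ∈ Q → j ≤ x := fun x hxP hxQ => min'_le _ _ (mem_inter.mpr ⟨hxP, hxQ⟩)
  obtain ⟨hj2, hjn⟩ := mem_Icc.mp (hP hjP)
  have hsingle : P ∩ Q ∩ Icc 2 j = {j} := by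
    ext x
    simp only [mem_inter, mem_Icc, mem_singleton]
    constructor
    · rintro ⟨⟨hxP, hxQ⟩, -, hxj⟩
      exact le_antisymm hxj (hjmin x hxP hxQ)
    · rintro rfl
      exact ⟨⟨hjP, hjQ⟩, hj2, le_rfl⟩
  obtain ⟨t, ht, htPQ⟩ := not_subset.mp fun hcov => h ⟨j, hsingle, hcov⟩
  obtain ⟨ht2, htj⟩ := mem_Icc.mp ht
  obtain ⟨htP, htQ⟩ := not_or.mp (mem_union.not.mp htPQ)
  have htj : t < j := lt_of_le_of_ne htj fun e => htP (e ▸ hjP)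
  refine ⟨insert t (P.filter (· < t)), ?_, ?_, ?_, fun A hA => ?_⟩
  · exact insert_subset (mem_Icc.mpr ⟨ht2, by omega⟩) ((filter_subset _ _).trans hP)
  · calc (insert t (P.filter (· < t))).card ≤ (P.filter (· < t)).card + 1 := card_insert_le _ _
      _ ≤ (P.erase j).card + 1 := by
        gcongr
        intro x hx
        obtain ⟨hxP, hxt⟩ := mem_filter.mp hx
        exact mem_erase.mpr ⟨by omega, hxP⟩
      _ = P.card := card_erase_add_one hjP
  · refine disjoint_left.mpr ?_
    simp only [mem_insert, mem_filter]
    rintro x (rfl | ⟨hxP, hxt⟩) hxQ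
    · exact htQ hxQ
    · exact absurd (hjmin x hxP hxQ) (by omega)
  · exact lexLE_of_mem_of_forall_lt (hA (mem_insert_self _ _)) htP
      fun x hxP hxt => hA (mem_insert_of_mem (mem_filter.mpr ⟨hxP, hxt⟩))

theorem lex_cross_intersecting_iff_general (n a b : ℕ)
    (hab : a + b ≤ n - 1)
    (P Q : Finset ℕ) (hP : P ⊆ Finset.Icc 2 n) (hQ : Q ⊆ Finset.Icc 2 n)
    (hPa : P.card ≤ a) (hQb : Q.card ≤ b) :
    (∀ A ∈ lexFam (Finset.Icc 2 n) P a, ∀ B ∈ lexFam (Finset.Icc 2 n) Q b,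
      (A ∩ B).Nonempty) ↔ strongInt P Q := by
  simp only [mem_lexFam, inter_eq_left.mpr hP, inter_eq_left.mpr hQ]
  constructor
  · intro hcross
    by_contra hns
    obtain ⟨A₀, hA₀X, hA₀card, hA₀Q, hA₀lex⟩ := exists_seed_of_not_strongInt hP hns
    obtain ⟨A, B, hA₀A, hQB, hAX, hBX, hA, hB, hAB⟩ := exists_disjoint_supersets_card_eq
      hA₀X hQ hA₀Q (hA₀card.trans hPa) hQb (by rw [Nat.card_Icc]; omega)
    exact not_disjoint_iff_nonempty_inter.mpr
      (hcross A ⟨⟨hAX, hA⟩, hA₀lex A hA₀A⟩ B ⟨⟨hBX, hB⟩, lexLE_of_subset hQB⟩) hAB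
  · rintro ⟨j, hj, hcov⟩ A ⟨⟨hAX, -⟩, hA⟩ B ⟨⟨hBX, -⟩, hB⟩
    have hjPQ : j ∈ P ∩ Q := mem_of_mem_inter_left (hj ▸ mem_singleton_self j)
    refine not_disjoint_iff_nonempty_inter.mp (not_disjoint_of_lexLE hA hB ?_ hjPQ)
    exact fun x hx hxj => hcov (mem_Icc.mpr ⟨(mem_Icc.mp (union_subset hAX hBX hx)).1, hxj.le⟩)

/-- For nonempty `P, Q ⊆ [2,n]` with `|P| ≤ a`, `|Q| ≤ b` and `a + b ≤ n - 1`, the families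
`L([2,n],P,a)` and `L([2,n],Q,b)` are cross-intersecting iff `P` and `Q` strongly intersect. -/
theorem lex_cross_intersecting_iff (n a b : ℕ) (ha : 0 < a) (hb : 0 < b)
    (hab : a + b ≤ n - 1)
    (P Q : Finset ℕ) (hP : P ⊆ Finset.Icc 2 n) (hQ : Q ⊆ Finset.Icc 2 n)
    (hPne : P.Nonempty) (hQne : Q.Nonempty) (hPa : P.card ≤ a) (hQb : Q.card ≤ b) :
    (∀ A ∈ lexFam (Finset.Icc 2 n) P a, ∀ B ∈ lexFam (Finset.Icc 2 n) Q b,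
      (A ∩ B).Nonempty) ↔ strongInt P Q :=
  lex_cross_intersecting_iff_general n a b hab P Q hP hQ hPa hQb
end

section
/- Let a, b > 0, n > a + b, and let A ⊆ C([n],a), B ⊆ C([n],b) be cross-intersecting families. Set t = b + 1 - a. If |B| ≤ C(n-t, a-1), then |A| + |B| ≤ C(n,a), and the inequality is strict unless |B| = 0. -/
/-!
Let `F = {[n] \ T : T ∈ B}`, a family of `(n - b)`-sets with `|F| = |B|`. No member of `A` lies
inside a member of `F`, so `A` is disjoint from the `a`-sets of the iterated shadow
`G = ∂^(n - b - a) F`, and `|A| + |G| ≤ C(n, a)`. It remains to show `|G| > |B|` when `B ≠ ∅`.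
With `r = n - b` and `m = a + r - 1`, the hypothesis gives `|F| ≤ C(m, r)`. By Kruskal–Katona,
`|G|` is at least the size of the corresponding shadow of an initial colex segment `𝒞` of the same
size; since `|𝒞| ≤ C(m, r)`, `𝒞` lives on the first `m` points, where iterated local LYM gives
`|∂^(r - a) 𝒞| ≥ |𝒞| C(m, a) / C(m, r)`. Finally `C(m, r) = C(m, a - 1) < C(m, a)` because `a < r`.
-/

open Finset
open scoped FinsetFamily

namespace Nat

theorem choose_lt_choose_succ {n k : ℕ} (h : k + 1 < n - k) : n.choose k < n.choose (k + 1) := by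
  have hpos : 0 < n.choose k := choose_pos (by omega)
  refine Nat.lt_of_mul_lt_mul_right (a := k + 1) ?_
  calc n.choose k * (k + 1) < n.choose k * (n - k) := Nat.mul_lt_mul_of_pos_left h hpos
    _ = n.choose (k + 1) * (k + 1) := (choose_succ_right_eq n k).symm

end Nat

namespace Finset

section Map

variable {α β : Type*}

theorem sized_map_mapEmbedding_iff (f : α ↪ β) {𝒜 : Finset (Finset α)} {r : ℕ} :
    ((𝒜.map (mapEmbedding f).toEmbedding : Finset (Finset β)) : Set (Finset β)).Sized r ↔
      (𝒜 : Set (Finset α)).Sized r := by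
  simp [Set.Sized]

variable [DecidableEq α] [DecidableEq β]

theorem shadow_map (f : α ↪ β) (𝒜 : Finset (Finset α)) :
    ∂ (𝒜.map (mapEmbedding f).toEmbedding) = (∂ 𝒜).map (mapEmbedding f).toEmbedding := by
  ext t
  simp only [mem_shadow_iff, mem_map, RelEmbedding.coe_toEmbedding, mapEmbedding_apply]
  constructor
  · rintro ⟨_, ⟨s, hs, rfl⟩, _, hx, rfl⟩
    obtain ⟨y, hy, rfl⟩ := mem_map.1 hx
    exact ⟨s.erase y, ⟨s, hs, y, hy, rfl⟩, map_erase f s y⟩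
  · rintro ⟨_, ⟨s, hs, y, hy, rfl⟩, rfl⟩
    exact ⟨s.map f, ⟨s, hs, rfl⟩, f y, mem_map_of_mem f hy, (map_erase f s y).symm⟩

theorem shadow_iterate_map (f : α ↪ β) (k : ℕ) (𝒜 : Finset (Finset α)) :
    ∂^[k] (𝒜.map (mapEmbedding f).toEmbedding) =
      (∂^[k] 𝒜).map (mapEmbedding f).toEmbedding := by
  induction k generalizing 𝒜 with
  | zero => rfl
  | succ k ih => simp only [Function.iterate_succ_apply, shadow_map, ih]

theorem card_shadow_iterate_map (f : α ↪ β) (k : ℕ) (𝒜 : Finset (Finset α)) :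
    #(∂^[k] (𝒜.map (mapEmbedding f).toEmbedding)) = #(∂^[k] 𝒜) := by
  rw [shadow_iterate_map, card_map]

theorem exists_eq_map_subtype {U : Finset α} {𝒜 : Finset (Finset α)} (h : ∀ s ∈ 𝒜, s ⊆ U) :
    ∃ 𝒜' : Finset (Finset U),
      𝒜 = 𝒜'.map (mapEmbedding (Function.Embedding.subtype (· ∈ U))).toEmbedding := by
  refine ⟨𝒜.image (·.subtype (· ∈ U)), ?_⟩
  rw [map_eq_image, image_image]
  refine (image_congr fun s hs => ?_).trans image_id |>.symm
  exact subtype_map_of_mem fun x hx => h s hs hx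

end Map

section LYM

variable {𝕜 α : Type*} [Semifield 𝕜] [LinearOrder 𝕜] [IsStrictOrderedRing 𝕜]
  [DecidableEq α] [Fintype α]

theorem card_div_choose_le_card_shadow_iterate_div_choose {𝒜 : Finset (Finset α)} {r j : ℕ}
    (hjr : j ≤ r) (h𝒜 : (𝒜 : Set (Finset α)).Sized r) :
    (#𝒜 : 𝕜) / (Fintype.card α).choose r ≤ #(∂^[j] 𝒜) / (Fintype.card α).choose (r - j) := by
  induction j with
  | zero => simp
  | succ j ih =>
    refine (ih (by omega)).trans ?_
    rw [Function.iterate_succ_apply', ← Nat.sub_sub]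
    exact local_lubell_yamamoto_meshalkin_inequality_div (by omega) h𝒜.shadow_iterate

end LYM

namespace Colex

theorem exists_isInitSeg_card_eq {α : Type*} [LinearOrder α] [Fintype α] {r N : ℕ}
    (hN : N ≤ (Fintype.card α).choose r) :
    ∃ 𝒞 : Finset (Finset α), IsInitSeg 𝒞 r ∧ #𝒞 = N := by
  obtain ⟨d, hd⟩ := Nat.exists_eq_add_of_le hN
  induction d generalizing N with
  | zero =>
    refine ⟨powersetCard r univ, ⟨Set.sized_powersetCard _ _, fun _ t _ ht => ?_⟩, ?_⟩
    · exact mem_powersetCard_univ.2 ht.2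
    · rw [card_powersetCard, card_univ, hd, add_zero]
  | succ d ih =>
    obtain ⟨𝒞, h𝒞, h𝒞card⟩ := ih (N := N + 1) (by omega) (by omega)
    obtain ⟨s, -, rfl⟩ := h𝒞.exists_initSeg (card_pos.1 (by omega))
    refine ⟨(initSeg s).erase s, ⟨fun t ht => h𝒞.1 (mem_of_mem_erase ht), ?_⟩, ?_⟩
    · rintro u t hu htu
      have hu' := mem_of_mem_erase hu
      refine mem_erase.2 ⟨?_, h𝒞.2 hu' htu⟩
      rintro rfl
      exact ((mem_initSeg.1 hu').2.trans_lt htu.1).false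
    · rw [card_erase_of_mem mem_initSeg_self, h𝒞card, Nat.add_sub_cancel]

-- A set colex-below a subset of `{0, …, m - 1}` is again such a subset.
theorem IsInitSeg.map_castLE {m n r : ℕ} {𝒞 : Finset (Finset (Fin m))} (h𝒞 : IsInitSeg 𝒞 r)
    (hmn : m ≤ n) : IsInitSeg (𝒞.map (mapEmbedding (Fin.castLEEmb hmn)).toEmbedding) r := by
  refine ⟨(sized_map_mapEmbedding_iff _).2 h𝒞.1, fun s u hs ⟨hus, hu⟩ => ?_⟩
  obtain ⟨t, ht, rfl⟩ := mem_map.1 hs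
  simp only [RelEmbedding.coe_toEmbedding, mapEmbedding_apply] at hus ⊢
  have hu_lt : ∀ x ∈ u.image Fin.val, x < m := by
    refine forall_lt_mono ((toColex_image_lt_toColex_image Fin.val_strictMono).2 hus).le ?_
    simp
  have hu_sub : u ⊆ univ.map (Fin.castLEEmb hmn) := fun x hx =>
    mem_map.2 ⟨⟨x, hu_lt x (mem_image_of_mem _ hx)⟩, mem_univ _, rfl⟩
  obtain ⟨u, -, rfl⟩ := subset_map_iff.1 hu_sub
  rw [map_eq_image, map_eq_image, Fin.coe_castLEEmb,
    toColex_image_lt_toColex_image (Fin.strictMono_castLE hmn)] at hus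
  exact mem_map_of_mem _ (h𝒞.2 ht ⟨hus, by simpa using hu⟩)

end Colex

theorem card_lt_card_shadow_iterate_of_card_le_choose_fin {n a r : ℕ}
    {𝒜 : Finset (Finset (Fin n))} (ha : 0 < a) (har : a < r) (hn : a + r - 1 ≤ n)
    (h𝒜 : 𝒜.Nonempty) (hsized : (𝒜 : Set (Finset (Fin n))).Sized r)
    (hcard : #𝒜 ≤ (a + r - 1).choose r) :
    #𝒜 < #(∂^[r - a] 𝒜) := by
  set m := a + r - 1
  obtain ⟨𝒞, h𝒞, h𝒞card⟩ :=
    Colex.exists_isInitSeg_card_eq (α := Fin m) (r := r) (N := #𝒜) (by rwa [Fintype.card_fin])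
  have hKK : #(∂^[r - a] 𝒞) ≤ #(∂^[r - a] 𝒜) := by
    simpa only [card_shadow_iterate_map] using
      iterated_kk hsized (by rw [card_map, h𝒞card]) (h𝒞.map_castLE hn)
  have hLYM := card_div_choose_le_card_shadow_iterate_div_choose (𝕜 := ℚ) (j := r - a)
    (Nat.sub_le r a) h𝒞.1
  have hchoose : m.choose r < m.choose a := by
    rw [Nat.choose_symm_of_eq_add (show m = r + (a - 1) by omega)]
    simpa [Nat.sub_add_cancel ha] using Nat.choose_lt_choose_succ (n := m) (k := a - 1) (by omega)
  rw [Fintype.card_fin, Nat.sub_sub_self har.le,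
    div_le_div_iff₀ (by exact_mod_cast Nat.choose_pos (by omega))
      (by exact_mod_cast (Nat.zero_le _).trans_lt hchoose)] at hLYM
  have h𝒞pos : 0 < #𝒞 := h𝒞card ▸ h𝒜.card_pos
  refine h𝒞card ▸ (Nat.lt_of_mul_lt_mul_right (a := m.choose r) ?_).trans_le hKK
  calc #𝒞 * m.choose r < #𝒞 * m.choose a := Nat.mul_lt_mul_of_pos_left hchoose h𝒞pos
    _ ≤ #(∂^[r - a] 𝒞) * m.choose r := by exact_mod_cast hLYM

section SetFamily

variable {α : Type*} [DecidableEq α]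

theorem card_lt_card_shadow_iterate_of_card_le_choose {a r : ℕ} {𝒜 : Finset (Finset α)}
    (ha : 0 < a) (har : a < r) (h𝒜 : 𝒜.Nonempty) (hsized : (𝒜 : Set (Finset α)).Sized r)
    (hcard : #𝒜 ≤ (a + r - 1).choose r) :
    #𝒜 < #(∂^[r - a] 𝒜) := by
  obtain ⟨U, hU⟩ : ∃ U : Finset α, ∀ s ∈ 𝒜, s ⊆ U := ⟨𝒜.sup id, fun s hs => le_sup (f := id) hs⟩
  obtain ⟨𝒜, rfl⟩ := exists_eq_map_subtype hU
  let e : U ↪ Fin (#U + (a + r - 1)) := U.equivFin.toEmbedding.trans (Fin.castLEEmb (by omega))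
  have := card_lt_card_shadow_iterate_of_card_le_choose_fin
    (𝒜 := 𝒜.map (mapEmbedding e).toEmbedding) ha har (by omega) (by simpa using h𝒜)
    ((sized_map_mapEmbedding_iff e).2 ((sized_map_mapEmbedding_iff _).1 hsized))
    (by simpa using hcard)
  simpa only [card_shadow_iterate_map, card_map] using this

theorem shadow_iterate_subset_powersetCard {U : Finset α} {𝒜 : Finset (Finset α)} {r : ℕ}
    (h : 𝒜 ⊆ powersetCard r U) (k : ℕ) : ∂^[k] 𝒜 ⊆ powersetCard (r - k) U := by
  intro t ht
  obtain ⟨s, hs, hts, hk⟩ := mem_shadow_iterate_iff_exists_sdiff.1 ht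
  obtain ⟨hsU, hsr⟩ := mem_powersetCard.1 (h hs)
  rw [card_sdiff_of_subset hts] at hk
  exact mem_powersetCard.2 ⟨hts.trans hsU, by have := card_le_card hts; omega⟩

theorem card_image_sdiff {U : Finset α} {ℬ : Finset (Finset α)} (h : ∀ T ∈ ℬ, T ⊆ U) :
    #(ℬ.image (U \ ·)) = #ℬ :=
  card_image_of_injOn fun T hT T' hT' hTT' => (sdiff_right_inj (h T hT) (h T' hT')).1 hTT'

theorem image_sdiff_subset_powersetCard {U : Finset α} {ℬ : Finset (Finset α)} {b : ℕ}
    (h : ℬ ⊆ powersetCard b U) : ℬ.image (U \ ·) ⊆ powersetCard (#U - b) U := by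
  refine image_subset_iff.2 fun T hT => ?_
  obtain ⟨hTU, hTb⟩ := mem_powersetCard.1 (h hT)
  exact mem_powersetCard.2 ⟨sdiff_subset, by rw [card_sdiff_of_subset hTU, hTb]⟩

theorem disjoint_shadow_iterate_image_sdiff {U : Finset α} {𝒜 ℬ : Finset (Finset α)}
    (h : ∀ S ∈ 𝒜, ∀ T ∈ ℬ, (S ∩ T).Nonempty) (k : ℕ) :
    Disjoint 𝒜 (∂^[k] (ℬ.image (U \ ·))) := by
  refine disjoint_left.2 fun S hS hS' => ?_
  obtain ⟨_, hT', hST, -⟩ := mem_shadow_iterate_iff_exists_sdiff.1 hS'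
  obtain ⟨T, hT, rfl⟩ := mem_image.1 hT'
  obtain ⟨x, hx⟩ := h S hS T hT
  exact (mem_sdiff.1 (hST (mem_inter.1 hx).1)).2 (mem_inter.1 hx).2

end SetFamily

end Finset

theorem cross_intersecting_sum_bound_general (n a b : ℕ) (ha : 0 < a)
    (hab : a + b < n)
    (A B : Finset (Finset ℕ))
    (hA : A ⊆ (Finset.Icc 1 n).powersetCard a)
    (hB : B ⊆ (Finset.Icc 1 n).powersetCard b)
    (hcross : ∀ S ∈ A, ∀ T ∈ B, (S ∩ T).Nonempty)
    (hBsize : B.card ≤ (n - (b + 1 - a)).choose (a - 1)) :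
    A.card + B.card ≤ n.choose a ∧
      (A.card + B.card = n.choose a → B = ∅) := by
  have hBsub : ∀ T ∈ B, T ⊆ Icc 1 n := fun T hT => (mem_powersetCard.1 (hB hT)).1
  set F := B.image (Icc 1 n \ ·)
  have hF : F ⊆ powersetCard (n - b) (Icc 1 n) := by
    simpa using image_sdiff_subset_powersetCard hB
  set G := ∂^[n - b - a] F
  have hG : G ⊆ powersetCard a (Icc 1 n) := by
    have := shadow_iterate_subset_powersetCard hF (n - b - a)
    rwa [show n - b - (n - b - a) = a by omega] at this
  have hAG : #A + #G ≤ n.choose a := by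
    rw [← card_union_of_disjoint (disjoint_shadow_iterate_image_sdiff hcross _)]
    simpa using card_le_card (union_subset hA hG)
  obtain rfl | hBne := B.eq_empty_or_nonempty
  · exact ⟨by rw [card_empty]; omega, fun _ => rfl⟩
  have hFB : #F = #B := card_image_sdiff hBsub
  have hBG : #B < #G := by
    rw [← hFB]
    refine card_lt_card_shadow_iterate_of_card_le_choose ha (by omega) (hBne.image _)
      ((Set.sized_powersetCard _ _).mono hF) ?_
    calc #F = #B := hFB
      _ ≤ (n - (b + 1 - a)).choose (a - 1) := hBsize
      _ ≤ (a + (n - b) - 1).choose (a - 1) := Nat.choose_le_choose _ (by omega)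
      _ = (a + (n - b) - 1).choose (n - b) := Nat.choose_symm_of_eq_add (by omega)
  exact ⟨by omega, fun h => by omega⟩

/-- Cross-intersecting families `A ⊆ C([n],a)`, `B ⊆ C([n],b)` with `n > a + b` and
`|B| ≤ C(n-t, a-1)` where `t = b + 1 - a`, satisfy `|A| + |B| ≤ C(n,a)`, with equality
only when `B = ∅`. -/
theorem cross_intersecting_sum_bound (n a b : ℕ) (ha : 0 < a) (hb : 0 < b)
    (hab : a + b < n)
    (A B : Finset (Finset ℕ))
    (hA : A ⊆ (Finset.Icc 1 n).powersetCard a)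
    (hB : B ⊆ (Finset.Icc 1 n).powersetCard b)
    (hcross : ∀ S ∈ A, ∀ T ∈ B, (S ∩ T).Nonempty)
    (hBsize : B.card ≤ (n - (b + 1 - a)).choose (a - 1)) :
    A.card + B.card ≤ n.choose a ∧
      (A.card + B.card = n.choose a → B = ∅) :=
  cross_intersecting_sum_bound_general n a b ha hab A B hA hB hcross hBsize
end

section
/- Let k ≥ s, m ≥ k + s, k ≥ 4 be integers. Let H ⊆ C([m],s) be a family with covering number τ(H) = 2 that is minimal with respect to this property (no proper subfamily has covering number 2), and let F ⊆ C([m],k-1) be the maximal family cross-intersecting with H. Then |F| + |H| is uniquely maximized when H is isomorphic to T_2'(s) = {[s], [s+1,2s]}. -/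
/-!
Write `b = k - 1` and call a `b`-subset of `[m]` an avoider of `H` if it is disjoint from some
member of `H`; then `|F| = C(m, b) - #avoiders`, so the claim is that `T_2'(s)` has the fewest
avoiders, with a margin of more than `|H| - 2` when `H` is not a pair.

Two disjoint `s`-sets have exactly `2 C(m-s, b) - C(m-2s, b)` avoiders. Conversely let `W` be an
`s`-uniform family without a common point, minimal with this property. Each `A ∈ W` then has a
point `z_A` lying in every other member but not in `A`; put `Z = {z_A}`, so `|Z| = |W|` and
`A ∩ Z = Z \ {z_A}`. A `b`-set meeting `Z` twice meets every member, one meeting `Z` exactly in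
`z_A` can only avoid `A`, and one missing `Z` is an avoider of the family `{A \ Z}` on `[m] \ Z`,
which is `(s - |W| + 1)`-uniform and again without a common point. Induction on `s` gives the
lower bound, and for `|W| ≥ 3` it leaves a surplus of `(|W| - 2) C(m-s-2, b-2) ≥ |W| - 1`,
as `C(m-s-2, b-2) ≥ b - 1 ≥ 2`. Finally `|H| = 2` forces `H` to be two disjoint sets,
i.e. a copy of `T_2'(s)`.
-/

open Finset Function

/-- `S` is a hitting set (cover) for the family `H`. -/
def covers (S : Finset ℕ) (H : Finset (Finset ℕ)) : Prop := ∀ A ∈ H, (S ∩ A).Nonempty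

/-- The maximal family of `(k-1)`-subsets of `[m]` cross-intersecting with `H`. -/
def maxCross (m k : ℕ) (H : Finset (Finset ℕ)) : Finset (Finset ℕ) :=
  ((Finset.Icc 1 m).powersetCard (k - 1)).filter (fun A => ∀ B ∈ H, (A ∩ B).Nonempty)

/-- Two families over the ground set `[m]` are isomorphic if one is obtained from the other
by a permutation of the ground set. -/
def isoFam (m : ℕ) (F G : Finset (Finset ℕ)) : Prop :=
  ∃ σ : Equiv.Perm ℕ, (∀ x, x ∈ Finset.Icc 1 m ↔ σ x ∈ Finset.Icc 1 m) ∧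
    G = F.image (fun S => S.image σ)

lemma Nat.choose_add_le_add_mul_choose (b l j d : ℕ) (h : j + d ≤ l + 1) :
    (j + d).choose (b + 1) ≤ j.choose (b + 1) + d * l.choose b := by
  induction d with
  | zero => simp
  | succ d ih =>
    have hmono : (j + d).choose b ≤ l.choose b := Nat.choose_le_choose b (by omega)
    rw [← add_assoc, Nat.choose_succ_succ', add_mul, one_mul]
    linarith [ih (by omega)]

lemma Nat.le_choose_succ_sub_choose {b p : ℕ} (hb : 1 ≤ b) (hbp : b ≤ p) :
    b ≤ (p + 1).choose b - p.choose b := by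
  obtain ⟨c, rfl⟩ := Nat.exists_eq_add_of_le' hb
  rw [Nat.choose_succ_succ', Nat.add_sub_cancel]
  calc c + 1 = (c + 1).choose c := (Nat.choose_succ_self_right c).symm
    _ ≤ p.choose c := Nat.choose_le_choose c hbp

section Avoiders

variable {α : Type*} {W : Finset (Finset α)}

def IsStar (W : Finset (Finset α)) : Prop := ∃ x, ∀ A ∈ W, x ∈ A

lemma nonempty_of_not_isStar [Nonempty α] (hW : ¬IsStar W) : W.Nonempty := by
  by_contra h
  rw [not_nonempty_iff_eq_empty] at h
  exact hW ⟨Classical.arbitrary α, by simp [h]⟩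

lemma two_le_card_of_not_isStar [Nonempty α] (hW : ¬IsStar W) (hne : ∀ A ∈ W, A.Nonempty) :
    2 ≤ #W := by
  by_contra! h
  obtain ⟨A, hA⟩ := nonempty_of_not_isStar hW
  obtain ⟨x, hx⟩ := hne A hA
  exact hW ⟨x, fun B hB => card_le_one.1 (by omega) B hB A hA ▸ hx⟩

variable [DecidableEq α] {M A B X : Finset α} {W₀ : Finset (Finset α)} {b w : ℕ}

def avoiders (M : Finset α) (b : ℕ) (W : Finset (Finset α)) : Finset (Finset α) :=
  (M.powersetCard b).filter fun B => ∃ A ∈ W, Disjoint B A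

lemma avoiders_mono (h : W₀ ⊆ W) : avoiders M b W₀ ⊆ avoiders M b W :=
  monotone_filter_right _ fun _ _ ⟨A, hA, hBA⟩ => ⟨A, h hA, hBA⟩

lemma filter_disjoint_powersetCard :
    (M.powersetCard b).filter (Disjoint · X) = (M \ X).powersetCard b := by
  ext B
  simp [subset_sdiff, and_assoc, and_comm (a := #B = b)]

lemma card_filter_disjoint_powersetCard (hX : X ⊆ M) :
    #((M.powersetCard b).filter (Disjoint · X)) = (#M - #X).choose b := by
  rw [filter_disjoint_powersetCard, card_powersetCard, card_sdiff_of_subset hX]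

lemma card_avoiders_pair (hA : A ⊆ M) (hB : B ⊆ M) :
    #(avoiders M b {A, B}) + (#M - #(A ∪ B)).choose b
      = (#M - #A).choose b + (#M - #B).choose b := by
  have hunion : avoiders M b {A, B}
      = (M.powersetCard b).filter (Disjoint · A) ∪ (M.powersetCard b).filter (Disjoint · B) := by
    simp [avoiders, ← filter_or]
  have hinter : (M.powersetCard b).filter (Disjoint · A) ∩ (M.powersetCard b).filter (Disjoint · B)
      = (M.powersetCard b).filter (Disjoint · (A ∪ B)) := by
    simp [← filter_and]
  rw [hunion, ← card_filter_disjoint_powersetCard hA, ← card_filter_disjoint_powersetCard hB,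
    ← card_filter_disjoint_powersetCard (union_subset hA hB), ← hinter, card_union_add_card_inter]

lemma card_avoiders_pair_of_disjoint (hA : A ⊆ M) (hB : B ⊆ M) (hAB : Disjoint A B)
    (hAw : #A = w) (hBw : #B = w) :
    #(avoiders M b {A, B}) + (#M - 2 * w).choose b = 2 * (#M - w).choose b := by
  have := card_avoiders_pair (b := b) hA hB
  rw [card_union_of_disjoint hAB, hAw, hBw, ← two_mul] at this
  omega

lemma filter_disjoint_avoiders (Z : Finset α) :
    (avoiders M b W).filter (Disjoint · Z) = avoiders (M \ Z) b (W.image (· \ Z)) := by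
  ext B
  simp only [avoiders, mem_filter, mem_powersetCard, subset_sdiff, exists_mem_image]
  constructor
  · rintro ⟨⟨⟨hBM, hBb⟩, A, hA, hBA⟩, hBZ⟩
    exact ⟨⟨⟨hBM, hBZ⟩, hBb⟩, A, hA, hBA.mono_right sdiff_subset⟩
  · rintro ⟨⟨⟨hBM, hBZ⟩, hBb⟩, A, hA, hBA⟩
    refine ⟨⟨⟨hBM, hBb⟩, A, hA, ?_⟩, hBZ⟩
    rw [← sdiff_union_inter A Z]
    exact disjoint_union_right.2 ⟨hBA, hBZ.mono_right inter_subset_right⟩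

def CoversAllBut (W : Finset (Finset α)) (z : Finset α → α) : Prop :=
  ∀ A ∈ W, z A ∉ A ∧ ∀ B ∈ W, B ≠ A → z A ∈ B

lemma exists_coversAllBut [Nonempty α] (hW : Minimal (fun W => ¬IsStar W) W) :
    ∃ z, CoversAllBut W z := by
  have key : ∀ A ∈ W, ∃ x, x ∉ A ∧ ∀ B ∈ W, B ≠ A → x ∈ B := by
    intro A hA
    obtain ⟨x, hx⟩ := not_not.mp (hW.not_prop_of_lt (erase_ssubset hA))
    refine ⟨x, fun hxA => hW.prop ⟨x, fun B hB => ?_⟩, fun B hB hBA => hx B (mem_erase.2 ⟨hBA, hB⟩)⟩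
    obtain rfl | hBA := eq_or_ne B A
    exacts [hxA, hx B (mem_erase.2 ⟨hBA, hB⟩)]
  choose! z hz using key
  exact ⟨z, hz⟩

namespace CoversAllBut

variable {z : Finset α → α}

lemma injOn (hz : CoversAllBut W z) : Set.InjOn z W := by
  intro A hA B hB hAB
  by_contra hne
  exact (hz A hA).1 (hAB ▸ (hz B hB).2 A hA hne)

lemma card_image (hz : CoversAllBut W z) : #(W.image z) = #W :=
  card_image_of_injOn hz.injOn

lemma inter_image (hz : CoversAllBut W z) (hA : A ∈ W) :
    A ∩ W.image z = (W.image z).erase (z A) := by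
  ext x
  simp only [mem_inter, mem_erase, mem_image]
  constructor
  · rintro ⟨hxA, B, hB, rfl⟩
    exact ⟨fun h => (hz A hA).1 (h ▸ hxA), B, hB, rfl⟩
  · rintro ⟨hne, B, hB, rfl⟩
    exact ⟨(hz B hB).2 A hA fun h => hne (h ▸ rfl), B, hB, rfl⟩

lemma card_sdiff_image (hz : CoversAllBut W z) (hA : A ∈ W) :
    #(A \ W.image z) = #A - (#W - 1) := by
  rw [card_sdiff, inter_comm, hz.inter_image hA, card_erase_of_mem (mem_image_of_mem z hA),
    hz.card_image]

lemma image_subset (hz : CoversAllBut W z) (hW : ∀ A ∈ W, A ⊆ M) (hr : 2 ≤ #W) :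
    W.image z ⊆ M := by
  simp only [image_subset_iff]
  intro A hA
  obtain ⟨B, hB, hBA⟩ := exists_mem_ne (by omega : 1 < #W) A
  exact hW B hB ((hz A hA).2 B hB hBA)

lemma filter_not_disjoint_avoiders (hz : CoversAllBut W z) :
    (avoiders M b W).filter (¬Disjoint · (W.image z))
      = W.biUnion fun A => ((M \ A).powersetCard b).filter (z A ∈ ·) := by
  ext B
  simp only [avoiders, mem_filter, mem_powersetCard, mem_biUnion, subset_sdiff,
    not_disjoint_iff, mem_image]
  constructor
  · rintro ⟨⟨⟨hBM, hBb⟩, A, hA, hBA⟩, x, hxB, A', hA', rfl⟩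
    obtain rfl : A' = A := by
      by_contra hne
      exact disjoint_left.1 hBA hxB ((hz A' hA').2 A hA fun h => hne h.symm)
    exact ⟨A', hA', ⟨⟨hBM, hBA⟩, hBb⟩, hxB⟩
  · rintro ⟨A, hA, ⟨⟨hBM, hBA⟩, hBb⟩, hzB⟩
    exact ⟨⟨⟨hBM, hBb⟩, A, hA, hBA⟩, z A, hzB, A, hA, rfl⟩

lemma card_avoiders (hz : CoversAllBut W z) (hW : ∀ A ∈ W, A ⊆ M ∧ #A = w) (hr : 2 ≤ #W) :
    #(avoiders M (b + 1) W)
      = #W * (#M - w - 1).choose b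
        + #(avoiders (M \ W.image z) (b + 1) (W.image (· \ W.image z))) := by
  have hZM := hz.image_subset (fun A hA => (hW A hA).1) hr
  have hdisj : (W : Set (Finset α)).PairwiseDisjoint
      fun A => ((M \ A).powersetCard (b + 1)).filter (z A ∈ ·) := by
    intro A hA A' hA' hne
    simp only [onFun, disjoint_left, mem_filter, mem_powersetCard, subset_sdiff]
    rintro B ⟨-, hzB⟩ ⟨⟨⟨-, hBA'⟩, -⟩, -⟩
    exact hBA' hzB ((hz A hA).2 A' hA' (Ne.symm hne))
  have hpiece : ∀ A ∈ W,
      #(((M \ A).powersetCard (b + 1)).filter (z A ∈ ·)) = (#M - w - 1).choose b := by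
    intro A hA
    have hzA : {z A} ⊆ M \ A :=
      singleton_subset_iff.2 (mem_sdiff.2 ⟨hZM (mem_image_of_mem z hA), (hz A hA).1⟩)
    have := card_filter_powersetCard_subset _ _ (b + 1) hzA (by simp)
    simp only [singleton_subset_iff, card_singleton, add_tsub_cancel_right] at this
    rw [this, card_sdiff_of_subset (hW A hA).1, (hW A hA).2]
  rw [← card_filter_add_card_filter_not (p := (Disjoint · (W.image z))), filter_disjoint_avoiders,
    hz.filter_not_disjoint_avoiders, card_biUnion hdisj, sum_congr rfl hpiece, sum_const,
    smul_eq_mul, add_comm]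

end CoversAllBut

variable (α) in
def AvoidersLowerBound (b w : ℕ) : Prop :=
  ∀ (M : Finset α) (W : Finset (Finset α)), (∀ A ∈ W, A ⊆ M ∧ #A = w) → ¬IsStar W →
    2 * w ≤ #M → 2 * (#M - w).choose b ≤ #(avoiders M b W) + (#M - 2 * w).choose b

lemma CoversAllBut.le_card_avoiders {z : Finset α → α} (hz : CoversAllBut W z)
    (hW : ∀ A ∈ W, A ⊆ M ∧ #A = w) (hstar : ¬IsStar W) (hr : 2 ≤ #W) (hn : 2 * w ≤ #M)
    (hred : AvoidersLowerBound α (b + 1) (w - (#W - 1))) :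
    2 * (#M - w).choose (b + 1) + (#W - 2) * ((#M - w - 1).choose b - (#M - w - 2).choose b)
      ≤ #(avoiders M (b + 1) W) + (#M - 2 * w).choose (b + 1) := by
  have hrec := hz.card_avoiders (b := b) hW hr
  set Z := W.image z
  have hZM : Z ⊆ M := hz.image_subset (fun A hA => (hW A hA).1) hr
  obtain ⟨A, hA⟩ := card_pos.1 (by omega : 0 < #W)
  have hrw : #W - 1 ≤ w := by
    rw [← (hW A hA).2, ← hz.card_image, ← card_erase_of_mem (mem_image_of_mem z hA),
      ← hz.inter_image hA]
    exact card_le_card inter_subset_left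
  have hW' : ∀ A' ∈ W.image (· \ Z), A' ⊆ M \ Z ∧ #A' = w - (#W - 1) := by
    simp only [mem_image]
    rintro _ ⟨A, hA, rfl⟩
    exact ⟨sdiff_subset_sdiff (hW A hA).1 le_rfl, (hW A hA).2 ▸ hz.card_sdiff_image hA⟩
  have hstar' : ¬IsStar (W.image (· \ Z)) := fun ⟨x, hx⟩ =>
    hstar ⟨x, fun A hA => (mem_sdiff.1 (hx _ (mem_image_of_mem _ hA))).1⟩
  have hMZ : #(M \ Z) = #M - #W := by rw [card_sdiff_of_subset hZM, hz.card_image]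
  have ih := hred (M \ Z) _ hW' hstar' (by omega)
  rw [hMZ] at ih
  set n := #M
  set r := #W
  rw [show n - r - (w - (r - 1)) = n - w - 1 by omega,
    show n - r - 2 * (w - (r - 1)) = n - 2 * w + (r - 2) by omega] at ih
  have hpascal : (n - w).choose (b + 1) = (n - w - 1).choose b + (n - w - 1).choose (b + 1) := by
    rw [show n - w = n - w - 1 + 1 by omega, Nat.choose_succ_succ', Nat.add_sub_cancel]
  have hadd := Nat.choose_add_le_add_mul_choose b (n - w - 2) (n - 2 * w) (r - 2) (by omega)
  have hmono : (n - w - 2).choose b ≤ (n - w - 1).choose b := Nat.choose_le_choose b (by omega)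
  have hdist : (r - 2) * ((n - w - 1).choose b - (n - w - 2).choose b)
      + (r - 2) * (n - w - 2).choose b = (r - 2) * (n - w - 1).choose b := by
    rw [← mul_add, Nat.sub_add_cancel hmono]
  have hsplit : r * (n - w - 1).choose b
      = (r - 2) * (n - w - 1).choose b + 2 * (n - w - 1).choose b := by
    rw [← add_mul, Nat.sub_add_cancel hr]
  omega

theorem avoidersLowerBound [Nonempty α] (b w : ℕ) : AvoidersLowerBound α (b + 1) w := by
  induction w using Nat.strong_induction_on with
  | _ w ih =>
  intro M W hW hstar hn
  obtain rfl | hw := Nat.eq_zero_or_pos w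
  · obtain ⟨A, hA⟩ := nonempty_of_not_isStar hstar
    have hall : avoiders M (b + 1) W = M.powersetCard (b + 1) := by
      refine filter_true_of_mem fun B _ => ⟨A, hA, ?_⟩
      simp [card_eq_zero.1 (hW A hA).2]
    simp [hall, two_mul]
  · obtain ⟨W₀, hW₀W, hmin⟩ := exists_minimal_le_of_wellFoundedLT (fun W => ¬IsStar W) W hstar
    obtain ⟨z, hz⟩ := exists_coversAllBut hmin
    have hW₀ : ∀ A ∈ W₀, A ⊆ M ∧ #A = w := fun A hA => hW A (hW₀W hA)
    have hr := two_le_card_of_not_isStar hmin.prop fun A hA => card_pos.1 ((hW₀ A hA).2 ▸ hw)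
    have := hz.le_card_avoiders hW₀ hmin.prop hr hn (ih _ (by omega))
    have := card_le_card (avoiders_mono (M := M) (b := b + 1) hW₀W)
    omega

end Avoiders

lemma isStar_iff_exists_covers {W : Finset (Finset ℕ)} :
    IsStar W ↔ ∃ S : Finset ℕ, #S ≤ 1 ∧ covers S W := by
  constructor
  · rintro ⟨x, hx⟩
    exact ⟨{x}, by simp, fun A hA => ⟨x, by simp [hx A hA]⟩⟩
  · rintro ⟨S, hS, hcov⟩
    obtain ⟨x, hSx⟩ := card_le_one_iff_subset_singleton.1 hS
    refine ⟨x, fun A hA => ?_⟩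
    obtain ⟨y, hy⟩ := hcov A hA
    obtain rfl := mem_singleton.1 (hSx (mem_inter.1 hy).1)
    exact (mem_inter.1 hy).2

lemma card_maxCross_add_card_avoiders (m k : ℕ) (W : Finset (Finset ℕ)) :
    #(maxCross m k W) + #(avoiders (Icc 1 m) (k - 1) W) = m.choose (k - 1) := by
  have := card_filter_add_card_filter_not (s := (Icc 1 m).powersetCard (k - 1))
    (p := fun B => ∀ A ∈ W, (B ∩ A).Nonempty)
  rw [card_powersetCard, Nat.card_Icc, Nat.add_sub_cancel] at this
  rw [maxCross, ← this, avoiders]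
  congr 3
  ext B
  simp [disjoint_iff_inter_eq_empty, not_nonempty_iff_eq_empty]

lemma minimal_not_isStar_of_covers {H : Finset (Finset ℕ)}
    (h1 : ¬∃ S : Finset ℕ, #S ≤ 1 ∧ covers S H)
    (hmin : ∀ G ⊆ H, G ≠ H → ∃ S : Finset ℕ, #S ≤ 1 ∧ covers S G) :
    Minimal (fun W => ¬IsStar W) H := by
  refine ⟨fun h => h1 (isStar_iff_exists_covers.1 h), fun G hG hGH => ?_⟩
  by_contra hne
  exact hG (isStar_iff_exists_covers.2 (hmin G hGH fun h => hne (h ▸ le_rfl)))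

lemma card_maxCross_pair {m k s : ℕ} {A B : Finset ℕ} (hA : A ⊆ Icc 1 m) (hB : B ⊆ Icc 1 m)
    (hAB : Disjoint A B) (hAs : #A = s) (hBs : #B = s) :
    #(maxCross m k {A, B}) + 2 * (m - s).choose (k - 1)
      = m.choose (k - 1) + (m - 2 * s).choose (k - 1) := by
  have := card_avoiders_pair_of_disjoint (b := k - 1) hA hB hAB hAs hBs
  rw [Nat.card_Icc, Nat.add_sub_cancel] at this
  have := card_maxCross_add_card_avoiders m k {A, B}
  omega

theorem Finset.exists_perm_forall_image_eq {ι α : Type*} [Finite ι] [DecidableEq α]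
    (s t : ι → Finset α) (hs : Pairwise (Disjoint on s)) (ht : Pairwise (Disjoint on t))
    (hst : ∀ i, #(s i) = #(t i)) : ∃ σ : Equiv.Perm α, ∀ i, (s i).image σ = t i := by
  have hinj : ∀ (u : ι → Finset α), Pairwise (Disjoint on u) → ∀ e : ∀ i, s i ≃ u i,
      Injective fun p : Σ i, s i => (e p.1 p.2 : α) := by
    rintro u hu e ⟨i, x⟩ ⟨j, y⟩ (h : (e i x : α) = e j y)
    obtain rfl : i = j := by
      by_contra hij
      exact disjoint_left.1 (hu hij) (e i x).2 (h ▸ (e j y).2)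
    obtain rfl : x = y := (e i).injective (Subtype.ext h)
    rfl
  let e := fun i => (s i).equivOfCardEq (hst i)
  obtain ⟨σ, hσ⟩ := Equiv.Perm.exists_extending_pair _ _
    (hinj s hs fun i => Equiv.refl _) (hinj t ht e)
  refine ⟨σ, fun i => eq_of_subset_of_card_le ?_ ?_⟩
  · simp only [image_subset_iff]
    exact fun x hx => hσ ⟨i, x, hx⟩ ▸ (e i ⟨x, hx⟩).2
  · rw [card_image_of_injective _ σ.injective, hst]

lemma isoFam_pair {m : ℕ} {P Q A B : Finset ℕ} (hPQ : Disjoint P Q) (hAB : Disjoint A B)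
    (hP : P ⊆ Icc 1 m) (hQ : Q ⊆ Icc 1 m) (hA : A ⊆ Icc 1 m) (hB : B ⊆ Icc 1 m)
    (hPA : #P = #A) (hQB : #Q = #B) : isoFam m {P, Q} {A, B} := by
  set M := Icc 1 m
  have hPQM : P ∪ Q ⊆ M := union_subset hP hQ
  have hABM : A ∪ B ⊆ M := union_subset hA hB
  have hdisj : ∀ {X Y : Finset ℕ}, Disjoint X Y →
      Pairwise (Disjoint on ![X, Y, M \ (X ∪ Y)]) := by
    intro X Y hXY i j hij
    have hX : Disjoint X (M \ (X ∪ Y)) := disjoint_sdiff.mono_left subset_union_left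
    have hY : Disjoint Y (M \ (X ∪ Y)) := disjoint_sdiff.mono_left subset_union_right
    fin_cases i <;> fin_cases j <;> simp_all [onFun, hXY.symm, hX.symm, hY.symm]
  -- the third pieces make `σ` map `[m]` onto itself
  obtain ⟨σ, hσ⟩ := exists_perm_forall_image_eq ![P, Q, M \ (P ∪ Q)] ![A, B, M \ (A ∪ B)]
    (hdisj hPQ) (hdisj hAB) fun i => by
      fin_cases i
      · exact hPA
      · exact hQB
      · simp [card_sdiff_of_subset, hPQM, hABM, card_union_of_disjoint, hPQ, hAB, hPA, hQB]
  have hσP : P.image σ = A := hσ 0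
  have hσQ : Q.image σ = B := hσ 1
  have hσR : (M \ (P ∪ Q)).image σ = M \ (A ∪ B) := hσ 2
  have hM : M.image σ = M := by
    conv_lhs => rw [← union_sdiff_of_subset hPQM]
    rw [image_union, image_union, hσP, hσQ, hσR, union_sdiff_of_subset hABM]
  refine ⟨σ, fun x => ?_, ?_⟩
  · rw [← σ.injective.mem_finset_image, hM]
  · rw [image_insert, image_singleton, hσP, hσQ]

/-- Lemma (first part): for `k ≥ s`, `m ≥ k + s`, `k ≥ 4`, among families `H ⊆ C([m],s)`
with covering number `2`, minimal w.r.t. this property, the quantity `|F| + |H|` (where `F`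
is the maximal `(k-1)`-uniform family cross-intersecting with `H`) is uniquely maximized
when `H` is isomorphic to `T_2'(s) = {[s],[s+1,2s]}`. -/
theorem min_cover_two_max (m s k : ℕ) (hsk : s ≤ k) (hm : k + s ≤ m) (hk : 4 ≤ k)
    (H : Finset (Finset ℕ)) (hH : H ⊆ (Finset.Icc 1 m).powersetCard s)
    (hcov2 : ∃ S : Finset ℕ, S.card ≤ 2 ∧ covers S H)
    (hnotcov1 : ¬ ∃ S : Finset ℕ, S.card ≤ 1 ∧ covers S H)
    (hmin : ∀ G ⊆ H, G ≠ H → ∃ S : Finset ℕ, S.card ≤ 1 ∧ covers S G) :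
    (maxCross m k H).card + H.card
        ≤ (maxCross m k ({Finset.Icc 1 s, Finset.Icc (s + 1) (2 * s)} :
            Finset (Finset ℕ))).card
          + ({Finset.Icc 1 s, Finset.Icc (s + 1) (2 * s)} : Finset (Finset ℕ)).card ∧
    ((maxCross m k H).card + H.card
        = (maxCross m k ({Finset.Icc 1 s, Finset.Icc (s + 1) (2 * s)} :
            Finset (Finset ℕ))).card
          + ({Finset.Icc 1 s, Finset.Icc (s + 1) (2 * s)} : Finset (Finset ℕ)).card →
      isoFam m ({Finset.Icc 1 s, Finset.Icc (s + 1) (2 * s)} : Finset (Finset ℕ)) H) := by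
  have hHM : ∀ A ∈ H, A ⊆ Icc 1 m ∧ #A = s := fun A hA => mem_powersetCard.1 (hH hA)
  have hHmin := minimal_not_isStar_of_covers hnotcov1 hmin
  have hs : 1 ≤ s := by
    obtain ⟨A, hA⟩ := nonempty_of_not_isStar hHmin.prop
    obtain ⟨S, -, hS⟩ := hcov2
    exact (hHM A hA).2 ▸ card_pos.2 ((hS A hA).mono inter_subset_right)
  have hP : Icc 1 s ⊆ Icc 1 m := Icc_subset_Icc_right (by omega)
  have hQ : Icc (s + 1) (2 * s) ⊆ Icc 1 m := Icc_subset_Icc (by omega) (by omega)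
  have hPQ : Disjoint (Icc 1 s) (Icc (s + 1) (2 * s)) := disjoint_left.2 fun x => by simp; omega
  have hPs : #(Icc 1 s) = s := by simp
  have hQs : #(Icc (s + 1) (2 * s)) = s := by simp; omega
  have hTcard : #({Icc 1 s, Icc (s + 1) (2 * s)} : Finset (Finset ℕ)) = 2 :=
    card_pair (hPQ.ne (by simp; omega))
  have hT := card_maxCross_pair (k := k) hP hQ hPQ hPs hQs
  obtain hH2 | hH3 := (two_le_card_of_not_isStar hHmin.prop fun A hA =>
    card_pos.1 ((hHM A hA).2 ▸ hs)).eq_or_lt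
  · obtain ⟨A, B, hAB, rfl⟩ := card_eq_two.1 hH2.symm
    have hdisj : Disjoint A B := disjoint_left.2 fun x hxA hxB =>
      hHmin.prop ⟨x, by simp [hxA, hxB]⟩
    obtain ⟨hA, hAs⟩ := hHM A (by simp)
    obtain ⟨hB, hBs⟩ := hHM B (by simp)
    have hH := card_maxCross_pair (k := k) hA hB hdisj hAs hBs
    exact ⟨by omega, fun _ => isoFam_pair hPQ hdisj hP hQ hA hB (hPs.trans hAs.symm)
      (hQs.trans hBs.symm)⟩
  · obtain ⟨z, hz⟩ := exists_coversAllBut hHmin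
    have hbound := hz.le_card_avoiders (b := k - 2) hHM hHmin.prop hH3.le (by simp; omega)
      (avoidersLowerBound _ _)
    rw [Nat.card_Icc, Nat.add_sub_cancel, show k - 2 + 1 = k - 1 by omega] at hbound
    have hFH := card_maxCross_add_card_avoiders m k H
    have hgain := Nat.le_choose_succ_sub_choose (b := k - 2) (p := m - s - 2) (by omega) (by omega)
    rw [show m - s - 2 + 1 = m - s - 1 by omega] at hgain
    have hmul := Nat.mul_le_mul_left (#H - 2) (le_trans (by omega : 2 ≤ k - 2) hgain)
    constructor <;> omega
end

section
/- Let H ⊆ C([m],s) be an intersecting family with covering number 2 that is minimal with respect to having covering number 2 (in particular |H| = z ≥ 3 and for each H_l ∈ H there is an element i_l contained in every member of H except H_l). Then z ≤ s + 1. -/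
open Finset

/-!
Minimality gives every member `A` a private element: an element outside `A` lying in all the
other members (a singleton cover of `H \ {A}` that also met `A` would cover `H`). For a fixed
member `B`, the private elements of the other members lie in `B` and are pairwise distinct,
since the private element of `A` lies in `A'` while that of `A'` does not. Hence
`|H| - 1 ≤ |B| = s`.
-/

theorem covers_singleton_iff {i : ℕ} {G : Finset (Finset ℕ)} :
    covers {i} G ↔ ∀ C ∈ G, i ∈ C := by
  simp only [covers, Finset.Nonempty, mem_inter, mem_singleton, exists_eq_left]

theorem exists_forall_mem_of_covers_of_card_le_one {S : Finset ℕ} {G : Finset (Finset ℕ)}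
    (hS : S.card ≤ 1) (hG : G.Nonempty) (hcov : covers S G) : ∃ i, ∀ C ∈ G, i ∈ C := by
  obtain ⟨C, hC⟩ := hG
  obtain ⟨i, hi⟩ := hcov C hC
  have hiS : i ∈ S := (mem_inter.1 hi).1
  have hSi : S = {i} := eq_singleton_iff_unique_mem.2 ⟨hiS, fun j hj => card_le_one.1 hS j hj i hiS⟩
  exact ⟨i, covers_singleton_iff.1 (hSi ▸ hcov)⟩

theorem exists_private_element {H : Finset (Finset ℕ)}
    (hnotcov1 : ¬ ∃ S : Finset ℕ, S.card ≤ 1 ∧ covers S H)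
    (hmin : ∀ G ⊆ H, G ≠ H → ∃ S : Finset ℕ, S.card ≤ 1 ∧ covers S G)
    {A B : Finset ℕ} (hA : A ∈ H) (hB : B ∈ H) (hBA : B ≠ A) :
    ∃ i, i ∉ A ∧ ∀ C ∈ H, C ≠ A → i ∈ C := by
  obtain ⟨S, hS, hcov⟩ := hmin (H.erase A) (erase_subset A H) (erase_ne_self.2 hA)
  obtain ⟨i, hi⟩ := exists_forall_mem_of_covers_of_card_le_one hS ⟨B, mem_erase.2 ⟨hBA, hB⟩⟩ hcov
  have hi_other : ∀ C ∈ H, C ≠ A → i ∈ C := fun C hC hCA => hi C (mem_erase.2 ⟨hCA, hC⟩)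
  refine ⟨i, fun hiA => hnotcov1 ⟨{i}, (card_singleton i).le, ?_⟩, hi_other⟩
  refine covers_singleton_iff.2 fun C hC => ?_
  by_cases hCA : C = A
  · exact hCA ▸ hiA
  · exact hi_other C hC hCA

theorem card_le_card_add_one_of_private {α : Type*} [DecidableEq α] {H : Finset (Finset α)}
    {B : Finset α} (hB : B ∈ H) (f : Finset α → α) (hf_not : ∀ A ∈ H, A ≠ B → f A ∉ A)
    (hf_mem : ∀ A ∈ H, A ≠ B → ∀ C ∈ H, C ≠ A → f A ∈ C) :
    H.card ≤ B.card + 1 := by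
  have hmaps : ∀ A ∈ H.erase B, f A ∈ B := fun A hA =>
    hf_mem A (mem_of_mem_erase hA) (ne_of_mem_erase hA) B hB (ne_of_mem_erase hA).symm
  have hinj : Set.InjOn f (H.erase B : Set (Finset α)) := by
    intro A hA A' hA' hfA
    by_contra hne
    have hfA_mem : f A ∈ A' :=
      hf_mem A (mem_of_mem_erase hA) (ne_of_mem_erase hA) A' (mem_of_mem_erase hA') (Ne.symm hne)
    exact hf_not A' (mem_of_mem_erase hA') (ne_of_mem_erase hA') (hfA ▸ hfA_mem)
  have hle := card_le_card_of_injOn f hmaps hinj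
  rw [card_erase_of_mem hB] at hle
  omega

theorem min_cover_two_card_bound_general (m s : ℕ)
    (H : Finset (Finset ℕ)) (hH : H ⊆ (Finset.Icc 1 m).powersetCard s)
    (hnotcov1 : ¬ ∃ S : Finset ℕ, S.card ≤ 1 ∧ covers S H)
    (hmin : ∀ G ⊆ H, G ≠ H → ∃ S : Finset ℕ, S.card ≤ 1 ∧ covers S G) :
    H.card ≤ s + 1 := by
  obtain ⟨B, hB⟩ : H.Nonempty := by
    rw [nonempty_iff_ne_empty]
    rintro rfl
    exact hnotcov1 ⟨∅, by simp, fun A hA => absurd hA (notMem_empty A)⟩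
  choose! f hf_not hf_mem using fun A hA (hAB : A ≠ B) =>
    exists_private_element hnotcov1 hmin hA hB hAB.symm
  have hBcard : B.card = s := (mem_powersetCard.1 (hH hB)).2
  calc H.card ≤ B.card + 1 := card_le_card_add_one_of_private hB f hf_not hf_mem
    _ = s + 1 := by rw [hBcard]

/-- Bollobás set-pair consequence: an intersecting family `H ⊆ C([m],s)` with covering
number `2`, minimal with respect to having covering number `2`, has at most `s + 1`
members. -/
theorem min_cover_two_card_bound (m s : ℕ)
    (H : Finset (Finset ℕ)) (hH : H ⊆ (Finset.Icc 1 m).powersetCard s)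
    (hint : ∀ A ∈ H, ∀ B ∈ H, (A ∩ B).Nonempty)
    (hcov2 : ∃ S : Finset ℕ, S.card ≤ 2 ∧ covers S H)
    (hnotcov1 : ¬ ∃ S : Finset ℕ, S.card ≤ 1 ∧ covers S H)
    (hmin : ∀ G ⊆ H, G ≠ H → ∃ S : Finset ℕ, S.card ≤ 1 ∧ covers S G)
    (hcard : 3 ≤ H.card) :
    H.card ≤ s + 1 :=
  min_cover_two_card_bound_general m s H hH hnotcov1 hmin
end
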